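/- arXiv:2408.12553 — 2 statements merged into one kernel-verified Lean document; each statement's English description precedes it below -/
import Mathlib

section
/- (Constant optimal price, Lemma 1 of the paper, linear case.) Let Λ : [0,T] → ℝ be nonnegative and integrable with ∫₀ᵀ Λ > 0, and v(p) = a - b·p with b > 0 on an interval where v > 0. Among all measurable price policies p : [0,T] → ℝ satisfying ∫₀ᵀ v(p(t))Λ(t) dt = S (with 0 < S < a·∫₀ᵀΛ appropriately bounded so the constant policy is interior), the revenue ∫₀ᵀ p(t)v(p(t))Λ(t) dt is maximized by the constant policy p(t) ≡ p₀ where v(p₀) = S/∫₀ᵀ Λ(t) dt, and moreover p₀ ≥ a/(2b) implies this constant policy strictly dominates any policy with nonconstant v(p(t)) (in the L² sense with weight Λ). -/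
/-!
Write `v = a - b p` for the sales rate and `c = S / K` for the constant rate. Pointwise,
`b p v = (a - v) v = (a - 2c) v + c² - (v - c)²`, so integrating against `Λ` gives
`b · revenue = (a - c) S - ∫ (v - c)² Λ`. The constant policy `v ≡ c` has revenue `(a - c) S / b`,
and any other policy loses `(1 / b) ∫ (v - c)² Λ`, which vanishes only if `v = c` `Λ`-a.e.
-/

open MeasureTheory

section

variable {α : Type*} [MeasurableSpace α] {μ : Measure α} {Λ p : α → ℝ} {a b c : ℝ}

lemma integral_sq_mul_pos {f w : α → ℝ} (hw : 0 ≤ᵐ[μ] w)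
    (hint : Integrable (fun t => f t ^ 2 * w t) μ)
    (hf : ¬ ∀ᵐ t ∂μ, w t ≠ 0 → f t = 0) :
    0 < ∫ t, f t ^ 2 * w t ∂μ := by
  have hnonneg : 0 ≤ᵐ[μ] fun t => f t ^ 2 * w t := by
    filter_upwards [hw] with t ht using mul_nonneg (sq_nonneg _) ht
  refine (integral_nonneg_of_ae hnonneg).lt_of_ne fun hzero => hf ?_
  filter_upwards [(integral_eq_zero_iff_of_nonneg_ae hnonneg hint).1 hzero.symm]
    with t ht hwt
  simpa [hwt] using ht

lemma sq_sub_mul_eq (a b c p Λ : ℝ) :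
    (a - b * p - c) ^ 2 * Λ
      = (a - 2 * c) * ((a - b * p) * Λ) + c ^ 2 * Λ - b * (p * (a - b * p) * Λ) := by
  ring

lemma integrable_sq_sub_mul (hΛ : Integrable Λ μ)
    (hv : Integrable (fun t => (a - b * p t) * Λ t) μ)
    (hpv : Integrable (fun t => p t * (a - b * p t) * Λ t) μ) :
    Integrable (fun t => (a - b * p t - c) ^ 2 * Λ t) μ := by
  simp only [sq_sub_mul_eq]
  exact ((hv.const_mul _).add (hΛ.const_mul _)).sub (hpv.const_mul _)

lemma mul_integral_revenue_add_integral_sq_sub (hΛ : Integrable Λ μ)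
    (hv : Integrable (fun t => (a - b * p t) * Λ t) μ)
    (hpv : Integrable (fun t => p t * (a - b * p t) * Λ t) μ) :
    b * ∫ t, p t * (a - b * p t) * Λ t ∂μ + ∫ t, (a - b * p t - c) ^ 2 * Λ t ∂μ
      = (a - 2 * c) * ∫ t, (a - b * p t) * Λ t ∂μ + c ^ 2 * ∫ t, Λ t ∂μ := by
  have hlin : Integrable (fun t => (a - 2 * c) * ((a - b * p t) * Λ t) + c ^ 2 * Λ t) μ :=
    (hv.const_mul _).add (hΛ.const_mul _)
  simp only [sq_sub_mul_eq]
  rw [integral_sub hlin (hpv.const_mul _), integral_add (hv.const_mul _) (hΛ.const_mul _),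
    integral_const_mul, integral_const_mul, integral_const_mul]
  ring

theorem integral_revenue_le_and_lt {S : ℝ} (hb : 0 < b) (hΛ : 0 ≤ᵐ[μ] Λ) (hΛint : Integrable Λ μ)
    (hK : ∫ t, Λ t ∂μ ≠ 0)
    (hv : Integrable (fun t => (a - b * p t) * Λ t) μ)
    (hpv : Integrable (fun t => p t * (a - b * p t) * Λ t) μ)
    (hS : ∫ t, (a - b * p t) * Λ t ∂μ = S) :
    (∫ t, p t * (a - b * p t) * Λ t ∂μ ≤ (a - S / ∫ t, Λ t ∂μ) / b * S) ∧
      (¬ (∀ᵐ t ∂μ, Λ t ≠ 0 → a - b * p t = S / ∫ s, Λ s ∂μ) →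
        ∫ t, p t * (a - b * p t) * Λ t ∂μ < (a - S / ∫ t, Λ t ∂μ) / b * S) := by
  set c := S / ∫ t, Λ t ∂μ
  have hcK : c ^ 2 * ∫ t, Λ t ∂μ = c * S := by
    rw [sq, mul_assoc, div_mul_cancel₀ S hK]
  have hid := mul_integral_revenue_add_integral_sq_sub (c := c) hΛint hv hpv
  rw [hS, hcK] at hid
  have hsq := integrable_sq_sub_mul (c := c) hΛint hv hpv
  rw [div_mul_eq_mul_div, le_div_iff₀ hb, lt_div_iff₀ hb]
  refine ⟨?_, fun hne => ?_⟩
  · have hdev : 0 ≤ ∫ t, (a - b * p t - c) ^ 2 * Λ t ∂μ :=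
      integral_nonneg_of_ae (by filter_upwards [hΛ] with t ht using mul_nonneg (sq_nonneg _) ht)
    linarith
  · have hdev : 0 < ∫ t, (a - b * p t - c) ^ 2 * Λ t ∂μ := by
      refine integral_sq_mul_pos hΛ hsq fun h => hne ?_
      filter_upwards [h] with t ht hΛt
      exact sub_eq_zero.1 (ht hΛt)
    linarith

end

theorem stmt8_general (T a b S : ℝ) (hT : 0 < T) (hb : 0 < b)
    (Λ : ℝ → ℝ) (hΛ : ∀ t ∈ Set.Icc 0 T, 0 ≤ Λ t)
    (hΛint : IntervalIntegrable Λ volume 0 T)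
    (hK : 0 < ∫ t in (0:ℝ)..T, Λ t) :
    ∀ p : ℝ → ℝ, Measurable p →
      (∀ t ∈ Set.Icc 0 T, 0 ≤ a - b * p t ∧ a - b * p t ≤ 1) →
      IntervalIntegrable (fun t => (a - b * p t) * Λ t) volume 0 T →
      IntervalIntegrable (fun t => p t * (a - b * p t) * Λ t) volume 0 T →
      (∫ t in (0:ℝ)..T, (a - b * p t) * Λ t) = S →
      ((∫ t in (0:ℝ)..T, p t * (a - b * p t) * Λ t)
          ≤ ((a - S / ∫ t in (0:ℝ)..T, Λ t) / b) * S) ∧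
      (¬ (∀ᵐ t ∂(volume.restrict (Set.Icc 0 T)),
            Λ t ≠ 0 → a - b * p t = S / ∫ s in (0:ℝ)..T, Λ s) →
        (∫ t in (0:ℝ)..T, p t * (a - b * p t) * Λ t)
          < ((a - S / ∫ t in (0:ℝ)..T, Λ t) / b) * S) := by
  intro p _ _ hv hpv hS
  have hIcc : ∀ f : ℝ → ℝ, ∫ t in (0:ℝ)..T, f t = ∫ t in Set.Icc 0 T, f t := fun f => by
    rw [intervalIntegral.integral_of_le hT.le, integral_Icc_eq_integral_Ioc]
  have hIntegrableOn :
      ∀ {f : ℝ → ℝ}, IntervalIntegrable f volume 0 T → IntegrableOn f (Set.Icc 0 T) :=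
    fun hf => (intervalIntegrable_iff_integrableOn_Icc_of_le hT.le).1 hf
  simp only [hIcc] at hK hS ⊢
  exact integral_revenue_le_and_lt hb (ae_restrict_of_forall_mem measurableSet_Icc hΛ)
    (hIntegrableOn hΛint) hK.ne' (hIntegrableOn hv) (hIntegrableOn hpv) hS

/-- Constant optimal price (linear case). Among all measurable price policies `p`
with `a - b * p t ∈ [0,1]` on `[0,T]` and fixed total sales `S`, the constant policy
`p₀ = (a - S/K)/b` (i.e. `v p₀ = S/K`) maximizes the revenue, whose optimal value is
`p₀ * S`; and any policy whose sales rate `v (p t)` is not `Λ`-a.e. equal to `S/K`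
yields strictly smaller revenue. -/
theorem stmt8 (T a b S : ℝ) (hT : 0 < T) (ha : 0 < a) (hb : 0 < b)
    (Λ : ℝ → ℝ) (hΛ : ∀ t ∈ Set.Icc 0 T, 0 ≤ Λ t)
    (hΛint : IntervalIntegrable Λ volume 0 T)
    (hK : 0 < ∫ t in (0:ℝ)..T, Λ t)
    (hS0 : 0 < S) (hS : S ≤ (a / 2) * ∫ t in (0:ℝ)..T, Λ t) :
    ∀ p : ℝ → ℝ, Measurable p →
      (∀ t ∈ Set.Icc 0 T, 0 ≤ a - b * p t ∧ a - b * p t ≤ 1) →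
      IntervalIntegrable (fun t => (a - b * p t) * Λ t) volume 0 T →
      IntervalIntegrable (fun t => p t * (a - b * p t) * Λ t) volume 0 T →
      (∫ t in (0:ℝ)..T, (a - b * p t) * Λ t) = S →
      ((∫ t in (0:ℝ)..T, p t * (a - b * p t) * Λ t)
          ≤ ((a - S / ∫ t in (0:ℝ)..T, Λ t) / b) * S) ∧
      (¬ (∀ᵐ t ∂(volume.restrict (Set.Icc 0 T)),
            Λ t ≠ 0 → a - b * p t = S / ∫ s in (0:ℝ)..T, Λ s) →
        (∫ t in (0:ℝ)..T, p t * (a - b * p t) * Λ t)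
          < ((a - S / ∫ t in (0:ℝ)..T, Λ t) / b) * S) :=
  stmt8_general T a b S hT hb Λ hΛ hΛint hK
end

section
/- (Normalization via TVM weight, linear case.) With the weighted objective ∫₀ᵀ φ(t)·p(t)·v(p(t))·Λ(t) dt and v(p) = a - b·p, substituting w(t) = v(p(t)) the integrand becomes φ(t)·Λ(t)·(a·w(t) - w(t)²)/b; for fixed sales ∫₀ᵀ w(t)Λ(t)dt = S, the unique maximizer over measurable w is w(t) = (1/2)(a + q·b/φ(t)) Λ-a.e., where q = (2S - a·K)/(b·I), K = ∫₀ᵀΛ, I = ∫₀ᵀ Λ/φ, provided φ(t) > 0 and the resulting w stays in (0, a). -/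
open MeasureTheory intervalIntegral

/-!
Dualize the sales constraint with multiplier `q`: since `∫ w Λ = ∫ w⋆ Λ = S`, the gap between
the objectives of `w⋆` and `w` equals the integral of the Lagrangian gap
`φ Λ (a w⋆ - w⋆²)/b - φ Λ (a w - w²)/b - q (w - w⋆) Λ`, and the choice `a + q b / φ = 2 w⋆`
completes the square pointwise to `Λ φ (w - w⋆)² / b ≥ 0`. The gap vanishes exactly when this
nonnegative integrand vanishes a.e., i.e. when `w = w⋆` wherever `Λ ≠ 0`.
-/

lemma lagrangian_gap_eq_sq {a b q φ Λ w wstar : ℝ} (hφ : φ ≠ 0) (hb : b ≠ 0)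
    (hwstar : wstar = 1 / 2 * (a + q * b / φ)) :
    φ * Λ * (a * wstar - wstar ^ 2) / b - φ * Λ * (a * w - w ^ 2) / b
        - q * (w * Λ - wstar * Λ) = Λ * φ * (w - wstar) ^ 2 / b := by
  subst hwstar
  field_simp
  ring

section Maximizer

variable {α : Type*} [MeasurableSpace α] {μ : Measure α} {a b q : ℝ} {Λ φ w wstar : α → ℝ}

theorem integral_objective_le_and_eq_iff (hΛ : ∀ᵐ t ∂μ, 0 ≤ Λ t) (hφ : ∀ᵐ t ∂μ, 0 < φ t)
    (hb : 0 < b) (hwstar : ∀ t, wstar t = 1 / 2 * (a + q * b / φ t))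
    (hwSales : Integrable (fun t => w t * Λ t) μ)
    (hwstarSales : Integrable (fun t => wstar t * Λ t) μ)
    (hwObj : Integrable (fun t => φ t * Λ t * (a * w t - w t ^ 2) / b) μ)
    (hwstarObj : Integrable (fun t => φ t * Λ t * (a * wstar t - wstar t ^ 2) / b) μ)
    (hS : ∫ t, w t * Λ t ∂μ = ∫ t, wstar t * Λ t ∂μ) :
    (∫ t, φ t * Λ t * (a * w t - w t ^ 2) / b ∂μ
        ≤ ∫ t, φ t * Λ t * (a * wstar t - wstar t ^ 2) / b ∂μ) ∧
      (∫ t, φ t * Λ t * (a * w t - w t ^ 2) / b ∂μ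
          = ∫ t, φ t * Λ t * (a * wstar t - wstar t ^ 2) / b ∂μ
        ↔ ∀ᵐ t ∂μ, Λ t ≠ 0 → w t = wstar t) := by
  set gap : α → ℝ := fun t => Λ t * φ t * (w t - wstar t) ^ 2 / b
  have hgap_ae : (fun t => φ t * Λ t * (a * wstar t - wstar t ^ 2) / b
      - φ t * Λ t * (a * w t - w t ^ 2) / b - q * (w t * Λ t - wstar t * Λ t)) =ᵐ[μ] gap := by
    filter_upwards [hφ] with t ht
    exact lagrangian_gap_eq_sq ht.ne' hb.ne' (hwstar t)
  have hgap_int : Integrable gap μ :=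
    ((hwstarObj.sub hwObj).sub ((hwSales.sub hwstarSales).const_mul q)).congr hgap_ae
  have hgap_integral : ∫ t, φ t * Λ t * (a * wstar t - wstar t ^ 2) / b ∂μ
      - ∫ t, φ t * Λ t * (a * w t - w t ^ 2) / b ∂μ = ∫ t, gap t ∂μ := by
    rw [← integral_congr_ae hgap_ae, MeasureTheory.integral_sub,
      MeasureTheory.integral_sub hwstarObj hwObj, MeasureTheory.integral_const_mul,
      MeasureTheory.integral_sub hwSales hwstarSales, hS]
    · ring
    exacts [hwstarObj.sub hwObj, (hwSales.sub hwstarSales).const_mul q]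
  have hgap_nonneg : 0 ≤ᵐ[μ] gap := by
    filter_upwards [hΛ, hφ] with t hΛt hφt
    exact div_nonneg (mul_nonneg (mul_nonneg hΛt hφt.le) (sq_nonneg _)) hb.le
  have hgap_zero_iff : gap =ᵐ[μ] 0 ↔ ∀ᵐ t ∂μ, Λ t ≠ 0 → w t = wstar t := by
    refine Filter.eventually_congr ?_
    filter_upwards [hφ] with t hφt
    simp [gap, hφt.ne', hb.ne', sub_eq_zero, or_iff_not_imp_left]
  refine ⟨sub_nonneg.1 (hgap_integral ▸ integral_nonneg_of_ae hgap_nonneg), ?_⟩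
  rw [eq_comm, ← sub_eq_zero, hgap_integral, integral_eq_zero_iff_of_nonneg_ae hgap_nonneg hgap_int,
    hgap_zero_iff]

end Maximizer

theorem stmt11_general (T a b S : ℝ) (hT : 0 < T) (hb : 0 < b)
    (Λ φ : ℝ → ℝ) (hΛ : ∀ t ∈ Set.Icc 0 T, 0 ≤ Λ t)
    (hφ : ∀ t ∈ Set.Icc 0 T, 0 < φ t)
    -- the candidate maximizer
    (q : ℝ)
    (wstar : ℝ → ℝ) (hwstar : ∀ t, wstar t = (1 / 2) * (a + q * b / φ t))
    (hwstarSales : IntervalIntegrable (fun t => wstar t * Λ t) volume 0 T)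
    (hwstarObj :
      IntervalIntegrable (fun t => φ t * Λ t * (a * wstar t - wstar t ^ 2) / b) volume 0 T)
    (hwstarS : (∫ t in (0:ℝ)..T, wstar t * Λ t) = S) :
    ∀ w : ℝ → ℝ, Measurable w →
      IntervalIntegrable (fun t => w t * Λ t) volume 0 T →
      IntervalIntegrable (fun t => φ t * Λ t * (a * w t - w t ^ 2) / b) volume 0 T →
      (∫ t in (0:ℝ)..T, w t * Λ t) = S →
      ((∫ t in (0:ℝ)..T, φ t * Λ t * (a * w t - w t ^ 2) / b)
          ≤ ∫ t in (0:ℝ)..T, φ t * Λ t * (a * wstar t - wstar t ^ 2) / b) ∧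
      ((∫ t in (0:ℝ)..T, φ t * Λ t * (a * w t - w t ^ 2) / b)
          = (∫ t in (0:ℝ)..T, φ t * Λ t * (a * wstar t - wstar t ^ 2) / b)
        ↔ ∀ᵐ t ∂(volume.restrict (Set.Icc 0 T)), Λ t ≠ 0 → w t = wstar t) := by
  intro w _ hwSales hwObj hwS
  have hIcc {f : ℝ → ℝ} (hf : IntervalIntegrable f volume 0 T) : IntegrableOn f (Set.Icc 0 T) :=
    (intervalIntegrable_iff_integrableOn_Icc_of_le hT.le).1 hf
  rw [← hwstarS] at hwS
  simp only [integral_of_le hT.le, ← integral_Icc_eq_integral_Ioc] at hwS ⊢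
  exact integral_objective_le_and_eq_iff (ae_restrict_of_forall_mem measurableSet_Icc hΛ)
    (ae_restrict_of_forall_mem measurableSet_Icc hφ) hb hwstar (hIcc hwSales)
    (hIcc hwstarSales) (hIcc hwObj) (hIcc hwstarObj) hwS

/-- Normalization via TVM weight (linear case): with weighted objective
`∫₀ᵀ φ Λ (a*w - w²)/b` and fixed sales `∫₀ᵀ w Λ = S`, the candidate
`w⋆ t = (1/2)*(a + q*b/φ t)` with `q = (2S - aK)/(bI)` is the unique maximizer
(up to `Λ`-a.e. equality) among all admissible measurable `w`. -/
theorem stmt11 (T a b S : ℝ) (hT : 0 < T) (ha : 0 < a) (hb : 0 < b)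
    (Λ φ : ℝ → ℝ) (hΛ : ∀ t ∈ Set.Icc 0 T, 0 ≤ Λ t) (hφmeas : Measurable φ)
    (hφ : ∀ t ∈ Set.Icc 0 T, 0 < φ t)
    (hΛint : IntervalIntegrable Λ volume 0 T)
    (hIint : IntervalIntegrable (fun t => Λ t / φ t) volume 0 T)
    (hK : 0 < ∫ t in (0:ℝ)..T, Λ t)
    (hI : 0 < ∫ t in (0:ℝ)..T, Λ t / φ t)
    -- the candidate maximizer
    (q : ℝ)
    (hq : q = (2 * S - a * ∫ t in (0:ℝ)..T, Λ t) / (b * ∫ t in (0:ℝ)..T, Λ t / φ t))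
    (wstar : ℝ → ℝ) (hwstar : ∀ t, wstar t = (1 / 2) * (a + q * b / φ t))
    (hrange : ∀ t ∈ Set.Icc 0 T, wstar t ∈ Set.Ioo 0 a)
    (hwstarSales : IntervalIntegrable (fun t => wstar t * Λ t) volume 0 T)
    (hwstarObj :
      IntervalIntegrable (fun t => φ t * Λ t * (a * wstar t - wstar t ^ 2) / b) volume 0 T)
    (hwstarS : (∫ t in (0:ℝ)..T, wstar t * Λ t) = S) :
    ∀ w : ℝ → ℝ, Measurable w →
      IntervalIntegrable (fun t => w t * Λ t) volume 0 T →
      IntervalIntegrable (fun t => φ t * Λ t * (a * w t - w t ^ 2) / b) volume 0 T →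
      (∫ t in (0:ℝ)..T, w t * Λ t) = S →
      ((∫ t in (0:ℝ)..T, φ t * Λ t * (a * w t - w t ^ 2) / b)
          ≤ ∫ t in (0:ℝ)..T, φ t * Λ t * (a * wstar t - wstar t ^ 2) / b) ∧
      ((∫ t in (0:ℝ)..T, φ t * Λ t * (a * w t - w t ^ 2) / b)
          = (∫ t in (0:ℝ)..T, φ t * Λ t * (a * wstar t - wstar t ^ 2) / b)
        ↔ ∀ᵐ t ∂(volume.restrict (Set.Icc 0 T)), Λ t ≠ 0 → w t = wstar t) :=
  stmt11_general T a b S hT hb Λ φ hΛ hφ q wstar hwstar hwstarSales hwstarObj hwstarS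
end
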